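/- arXiv:1510.08528 — 5 statements merged into one kernel-verified Lean document; each statement's English description precedes it below -/
import Mathlib

section
/- Let q ∈ ℂ with 0 < |q| < 1, let y ∈ ℂ be nonzero with y ∉ {q^k : k ∈ ℤ}, and let m ∈ ℤ. Then the function u ↦ A(q, y, u) has a simple pole at u = q^m with residue −q^m y^{−m} B(q, y); that is, lim_{u → q^m} (u − q^m) · A(q, y, u) = −q^m y^{−m} B(q, y). -/
open Complex Filter Topology

/-- The Jacobi theta function θ₁(τ, z) = i·∑_{n∈ℤ} (−1)ⁿ e^{πiτ(n−1/2)²} e^{2πiz(n−1/2)}. -/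
noncomputable def theta1 (τ z : ℂ) : ℂ :=
  Complex.I * ∑' n : ℤ, (-1 : ℂ) ^ n *
    Complex.exp (Real.pi * Complex.I * τ * ((n : ℂ) - 1/2) ^ 2) *
    Complex.exp (2 * Real.pi * Complex.I * z * ((n : ℂ) - 1/2))

/-- The lattice ℤ + τℤ ⊂ ℂ. -/
def lattice (τ : ℂ) : Set ℂ := {w : ℂ | ∃ m n : ℤ, w = (m : ℂ) + (n : ℂ) * τ}

/-- A(q,y,u) = ∏_{n≥1} (1−yuq^{n−1})(1−(yu)⁻¹qⁿ) / ((1−uq^{n−1})(1−u⁻¹qⁿ)). -/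
noncomputable def A (q y u : ℂ) : ℂ :=
  ∏' n : ℕ, ((1 - y * u * q ^ n) * (1 - (y * u)⁻¹ * q ^ (n + 1))) /
    ((1 - u * q ^ n) * (1 - u⁻¹ * q ^ (n + 1)))

/-- B(q,y) = ∏_{n≥1} (1−yq^{n−1})(1−y⁻¹qⁿ) / (1−qⁿ)². -/
noncomputable def B (q y : ℂ) : ℂ :=
  ∏' n : ℕ, ((1 - y * q ^ n) * (1 - y⁻¹ * q ^ (n + 1))) / (1 - q ^ (n + 1)) ^ 2

/-- Equivariant elliptic genus of the toric CY 3-fold with fixed-point set `V`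
and weight vectors `w v j = (aʲᵥ, bʲᵥ)`. -/
noncomputable def Z {V : Type*} [Fintype V] (w : V → Fin 3 → ℤ × ℤ)
    (τ z t₁ t₂ : ℂ) : ℂ :=
  ∑ v : V, ∏ j : Fin 3,
    theta1 τ (z + ((w v j).1 : ℂ) * t₁ + ((w v j).2 : ℂ) * t₂) /
      theta1 τ (((w v j).1 : ℂ) * t₁ + ((w v j).2 : ℂ) * t₂)

/-!
With `(x; q)_∞ = ∏ₙ (1 - x qⁿ)` (`qPochhammer q x`) and `θ(x) = (x; q)_∞ (q/x; q)_∞`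
(`qTheta q x`), one has `A(u) = θ(yu)/θ(u)` wherever `θ(u) ≠ 0`, and `B = θ(y)/(q; q)_∞²`.
Since `θ(u) = (1 - u) (uq; q)_∞ (q/u; q)_∞`, continuity of `(·; q)_∞` gives the residue `-B` at
`u = 1`. The quasi-periodicity `θ(qx) = -x⁻¹ θ(x)` gives `A(qu) = y⁻¹ A(u)`, so the residue at
`q^(m+1)` is `q y⁻¹` times the residue at `qᵐ`; induction on `m ∈ ℤ` in both directions finishes.
-/

noncomputable def qPochhammer (q x : ℂ) : ℂ := ∏' n : ℕ, (1 - x * q ^ n)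

noncomputable def qTheta (q x : ℂ) : ℂ := qPochhammer q x * qPochhammer q (q * x⁻¹)

lemma eventually_nhdsNE_ne_zpow {K : Type*} [NormedField K] {q : K} (hq0 : q ≠ 0)
    (hq : ‖q‖ < 1) (m : ℤ) : ∀ᶠ u in 𝓝[≠] (q ^ m), ∀ k : ℤ, u ≠ q ^ k := by
  have hq0' : 0 < ‖q‖ := norm_pos_iff.2 hq0
  have hIoo : Set.Ioo (‖q‖ ^ (m + 1)) (‖q‖ ^ (m - 1)) ∈ 𝓝 ‖q ^ m‖ := by
    rw [norm_zpow]
    exact Ioo_mem_nhds (zpow_lt_zpow_right_of_lt_one₀ hq0' hq (by omega))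
      (zpow_lt_zpow_right_of_lt_one₀ hq0' hq (by omega))
  filter_upwards [self_mem_nhdsWithin,
    nhdsWithin_le_nhds (continuous_norm.continuousAt.preimage_mem_nhds hIoo)]
    with u hne ⟨hlo, hhi⟩ k rfl
  dsimp only at hlo hhi
  rw [norm_zpow, zpow_lt_zpow_iff_right_of_lt_one₀ hq0' hq] at hlo hhi
  exact hne (congrArg _ (by omega))

section qPochhammer

variable {q : ℂ}

lemma summable_norm_mul_pow (hq : ‖q‖ < 1) (x : ℂ) : Summable fun n : ℕ => ‖x * q ^ n‖ := by
  simpa [norm_mul, norm_pow] using (summable_geometric_of_lt_one (norm_nonneg q) hq).mul_left ‖x‖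

lemma hasProd_qPochhammer (hq : ‖q‖ < 1) (x : ℂ) :
    HasProd (fun n : ℕ => 1 - x * q ^ n) (qPochhammer q x) := by
  simp_rw [qPochhammer, sub_eq_add_neg]
  exact (multipliable_one_add_of_summable (by simpa using summable_norm_mul_pow hq x)).hasProd

lemma qPochhammer_eq_one_sub_mul (hq : ‖q‖ < 1) (x : ℂ) :
    qPochhammer q x = (1 - x) * qPochhammer q (x * q) := by
  have h := tprod_eq_zero_mul' (f := fun n : ℕ => 1 - x * q ^ n)
    (by simpa only [pow_succ', mul_assoc] using (hasProd_qPochhammer hq (x * q)).multipliable)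
  unfold qPochhammer
  simpa only [pow_zero, mul_one, pow_succ', mul_assoc] using h

lemma qPochhammer_ne_zero (hq : ‖q‖ < 1) {x : ℂ} (hx : ∀ n : ℕ, x * q ^ n ≠ 1) :
    qPochhammer q x ≠ 0 := by
  have := tprod_one_add_ne_zero_of_summable (f := fun n : ℕ => -(x * q ^ n))
    (fun n => by rw [← sub_eq_add_neg, sub_ne_zero]; exact (hx n).symm)
    (by simpa using summable_norm_mul_pow hq x)
  simpa only [qPochhammer, sub_eq_add_neg] using this

lemma qPochhammer_self_ne_zero (hq : ‖q‖ < 1) : qPochhammer q q ≠ 0 := by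
  refine qPochhammer_ne_zero hq fun n h => ?_
  have : ‖q * q ^ n‖ < 1 := by
    rw [← pow_succ', norm_pow]
    exact pow_lt_one₀ (norm_nonneg q) hq n.succ_ne_zero
  simp [h] at this

lemma continuous_qPochhammer (hq : ‖q‖ < 1) : Continuous (qPochhammer q) := by
  refine continuous_iff_continuousAt.2 fun x₀ => ?_
  have hprod : HasProdLocallyUniformlyOn (fun n x => 1 + -(x * q ^ n))
      (fun x => ∏' n, (1 + -(x * q ^ n))) (Metric.ball 0 (‖x₀‖ + 1)) := by
    refine Summable.hasProdLocallyUniformlyOn_one_add Metric.isOpen_ball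
      ((summable_geometric_of_lt_one (norm_nonneg q) hq).mul_left (‖x₀‖ + 1))
      (.of_forall fun n x hx => ?_) fun n => by fun_prop
    rw [norm_neg, norm_mul, norm_pow]
    exact mul_le_mul_of_nonneg_right (mem_ball_zero_iff.1 hx).le (by positivity)
  have hcont := (hprod.tendstoLocallyUniformlyOn_finsetRange.continuousOn
    (.of_forall fun N => by fun_prop)).continuousAt
    (Metric.isOpen_ball.mem_nhds (mem_ball_zero_iff.2 (lt_add_one ‖x₀‖)))
  convert hcont using 1
  funext x
  simp only [qPochhammer, sub_eq_add_neg]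

end qPochhammer

section qTheta

variable {q : ℂ}

lemma qTheta_mul_self (hq : ‖q‖ < 1) (hq0 : q ≠ 0) {x : ℂ} (hx : x ≠ 0) :
    qTheta q (q * x) = -x⁻¹ * qTheta q x := by
  have hx' : q * (q * x)⁻¹ = x⁻¹ := by field_simp
  rw [qTheta, qTheta, hx', qPochhammer_eq_one_sub_mul hq x⁻¹, qPochhammer_eq_one_sub_mul hq x,
    mul_comm q x, mul_comm x⁻¹ q]
  field_simp
  ring

lemma qTheta_ne_zero (hq : ‖q‖ < 1) (hq0 : q ≠ 0) {u : ℂ} (hu : ∀ k : ℤ, u ≠ q ^ k) :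
    qTheta q u ≠ 0 := by
  refine mul_ne_zero (qPochhammer_ne_zero hq fun n h => hu (-n) ?_)
    (qPochhammer_ne_zero hq fun n h => hu (n + 1) ?_)
  · rw [zpow_neg, zpow_natCast]
    exact eq_inv_of_mul_eq_one_left h
  · have hu0 : u ≠ 0 := by rintro rfl; simp at h
    rw [zpow_add_one₀ hq0, zpow_natCast]
    field_simp at h
    linear_combination -h

end qTheta

section residue

variable {q y : ℂ}

lemma A_eq_qTheta_div (hq : ‖q‖ < 1) (y : ℂ) {u : ℂ} (hu : qTheta q u ≠ 0) :
    A q y u = qTheta q (y * u) / qTheta q u := by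
  have h := ((hasProd_qPochhammer hq (y * u)).mul (hasProd_qPochhammer hq (q * (y * u)⁻¹))).div₀
    ((hasProd_qPochhammer hq u).mul (hasProd_qPochhammer hq (q * u⁻¹))) hu
  rw [A, qTheta, qTheta, ← h.tprod_eq]
  congr 1
  funext n
  ring

lemma B_eq_qTheta_div (hq : ‖q‖ < 1) (y : ℂ) :
    B q y = qTheta q y / qPochhammer q q ^ 2 := by
  have h := ((hasProd_qPochhammer hq y).mul (hasProd_qPochhammer hq (q * y⁻¹))).div₀
    ((hasProd_qPochhammer hq q).pow 2) (pow_ne_zero 2 (qPochhammer_self_ne_zero hq))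
  rw [B, qTheta, ← h.tprod_eq]
  congr 1
  funext n
  ring

lemma A_mul_self (hq : ‖q‖ < 1) (hq0 : q ≠ 0) (hy : y ≠ 0) {u : ℂ} (hu0 : u ≠ 0)
    (hu : qTheta q u ≠ 0) : A q y (q * u) = y⁻¹ * A q y u := by
  have hqu : qTheta q (q * u) ≠ 0 := by
    rw [qTheta_mul_self hq hq0 hu0]
    exact mul_ne_zero (neg_ne_zero.2 (inv_ne_zero hu0)) hu
  rw [A_eq_qTheta_div hq y hqu, A_eq_qTheta_div hq y hu, mul_left_comm,
    qTheta_mul_self hq hq0 (mul_ne_zero hy hu0), qTheta_mul_self hq hq0 hu0]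
  field_simp

lemma tendsto_sub_one_mul_A (hq : ‖q‖ < 1) (hq0 : q ≠ 0) (hy : y ≠ 0) :
    Tendsto (fun u => (u - 1) * A q y u) (𝓝[≠] 1) (𝓝 (-B q y)) := by
  have hP := continuous_qPochhammer hq
  have hcont : ContinuousAt (fun u => -qTheta q (y * u) /
      (qPochhammer q (u * q) * qPochhammer q (q * u⁻¹))) 1 := by
    have hden := mul_ne_zero (qPochhammer_self_ne_zero hq) (qPochhammer_self_ne_zero hq)
    refine ContinuousAt.div ?_ ?_ (by simpa using hden)
    · unfold qTheta
      fun_prop (disch := simpa)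
    · fun_prop (disch := simp)
  have hlim : -qTheta q (y * 1) / (qPochhammer q (1 * q) * qPochhammer q (q * 1⁻¹)) = -B q y := by
    rw [B_eq_qTheta_div hq y]
    simp [sq, neg_div]
  rw [← hlim]
  refine hcont.continuousWithinAt.tendsto.congr' ?_
  filter_upwards [self_mem_nhdsWithin, zpow_zero q ▸ eventually_nhdsNE_ne_zpow hq0 hq 0]
    with u hu1 hu
  have hθ := qTheta_ne_zero hq hq0 hu
  have hθu : qTheta q u = (1 - u) * (qPochhammer q (u * q) * qPochhammer q (q * u⁻¹)) := by
    rw [qTheta, qPochhammer_eq_one_sub_mul hq u, mul_assoc]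
  have hden := right_ne_zero_of_mul (hθu ▸ hθ)
  have hu1' : 1 - u ≠ 0 := sub_ne_zero.2 (Ne.symm hu1)
  rw [A_eq_qTheta_div hq y hθ, hθu]
  field_simp
  ring

lemma tendsto_residue_A_zpow_succ_iff (hq : ‖q‖ < 1) (hq0 : q ≠ 0) (hy : y ≠ 0) (m : ℤ) :
    Tendsto (fun u => (u - q ^ (m + 1)) * A q y u) (𝓝[≠] (q ^ (m + 1)))
        (𝓝 (-(q ^ (m + 1)) * y ^ (-(m + 1)) * B q y)) ↔
      Tendsto (fun u => (u - q ^ m) * A q y u) (𝓝[≠] (q ^ m))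
        (𝓝 (-(q ^ m) * y ^ (-m) * B q y)) := by
  have hc : q * y⁻¹ ≠ 0 := mul_ne_zero hq0 (inv_ne_zero hy)
  have hval : -(q ^ (m + 1)) * y ^ (-(m + 1)) * B q y =
      q * y⁻¹ * (-(q ^ m) * y ^ (-m) * B q y) := by
    rw [zpow_add_one₀ hq0, neg_add, zpow_add₀ hy, zpow_neg_one]
    ring
  have hmap := (Homeomorph.mulLeft₀ q hq0).map_punctured_nhds_eq (q ^ m)
  rw [Homeomorph.coe_mulLeft₀] at hmap
  rw [hval, zpow_add_one₀ hq0, mul_comm _ q, ← hmap, tendsto_map'_iff,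
    (Homeomorph.mulLeft₀ _ hc).isInducing.tendsto_nhds_iff (f := fun u => (u - q ^ m) * A q y u)]
  refine tendsto_congr' ?_
  filter_upwards [eventually_nhdsNE_ne_zpow hq0 hq m,
    nhdsWithin_le_nhds (eventually_ne_nhds (zpow_ne_zero m hq0))] with u hu hu0
  simp only [Function.comp_apply, Homeomorph.coe_mulLeft₀]
  rw [A_mul_self hq hq0 hy hu0 (qTheta_ne_zero hq hq0 hu)]
  ring

end residue

theorem residue_A_at_qm_general (q y : ℂ) (hq0 : 0 < ‖q‖) (hq1 : ‖q‖ < 1)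
    (hy : y ≠ 0) (m : ℤ) :
    Filter.Tendsto (fun u : ℂ => (u - q ^ m) * A q y u)
      (𝓝[≠] (q ^ m)) (𝓝 (-(q ^ m) * y ^ (-m) * B q y)) := by
  have hq : q ≠ 0 := norm_pos_iff.1 hq0
  induction m using Int.induction_on with
  | zero => simpa using tendsto_sub_one_mul_A hq1 hq hy
  | succ m ih => exact (tendsto_residue_A_zpow_succ_iff hq1 hq hy m).2 ih
  | pred m ih =>
    exact (tendsto_residue_A_zpow_succ_iff hq1 hq hy (-m - 1)).1 (by rwa [sub_add_cancel])

/-- u ↦ A(q,y,u) has a simple pole at u = qᵐ with residue −qᵐ y^{−m} B(q,y). -/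
theorem residue_A_at_qm (q y : ℂ) (hq0 : 0 < ‖q‖) (hq1 : ‖q‖ < 1)
    (hy : y ≠ 0) (hy' : ∀ k : ℤ, y ≠ q ^ k) (m : ℤ) :
    Filter.Tendsto (fun u : ℂ => (u - q ^ m) * A q y u)
      (𝓝[≠] (q ^ m)) (𝓝 (-(q ^ m) * y ^ (-m) * B q y)) :=
  residue_A_at_qm_general q y hq0 hq1 hy m
end

section
/- Let q ∈ ℂ with 0 < |q| < 1, let y ∈ ℂ be nonzero with y ∉ {q^k : k ∈ ℤ}, let v ∈ ℂ be nonzero with v ∉ {q^k : k ∈ ℤ}, and let m ∈ ℤ. Then lim_{u → v^{−1}q^m} (u − v^{−1}q^m) · A(q, y, uv) = −v^{−1} q^m y^{−m} B(q, y), and lim_{u → v^{−1}q^m} (u − v^{−1}q^m) · A(q, y, (uv)^{−1}) = v^{−1} q^m y^{m} B(q, y). -/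
open Complex Filter Topology

/-!
Write `θ(x) = (x; q)_∞ (q/x; q)_∞` with `(x; q)_∞ = ∏ₙ (1 - x qⁿ)`. Then `A(q,y,w) = θ(yw)/θ(w)`
and `B(q,y) = θ(y)/(q; q)_∞²`. The quasi-periodicity `θ(qx) = -x⁻¹ θ(x)` gives
`A(q,y,qw) = y⁻¹ A(q,y,w)`, which moves the pole at `w = qᵐ` to the pole at `w = 1`; there
`θ(w) = (1 - w) (qw; q)_∞ (q/w; q)_∞` exhibits the residue `-B(q,y)`. Both limits follow by
substituting `w = uv` and `w = (uv)⁻¹`.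
-/

lemma tendsto_inv₀_nhdsNE {K : Type*} [DivisionRing K] [TopologicalSpace K] [ContinuousInv₀ K]
    {a : K} (ha : a ≠ 0) : Tendsto Inv.inv (𝓝[≠] a) (𝓝[≠] a⁻¹) :=
  tendsto_nhdsWithin_of_tendsto_nhds_of_eventually_within _
    ((continuousAt_inv₀ ha).mono_left nhdsWithin_le_nhds)
    (eventually_nhdsWithin_of_forall fun _ hx => inv_injective.ne hx)

lemma apply_zpow_mul {K : Type*} [Field K] {f : K → K} {q c : K} (hq : q ≠ 0) (hc : c ≠ 0)
    (hf : ∀ w ≠ 0, f (q * w) = c * f w) (m : ℤ) {w : K} (hw : w ≠ 0) :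
    f (q ^ m * w) = c ^ m * f w := by
  induction m using Int.induction_on with
  | zero => simp
  | succ k ih =>
    rw [zpow_add_one₀ hq, zpow_add_one₀ hc, mul_comm _ q, mul_assoc,
      hf _ (mul_ne_zero (zpow_ne_zero _ hq) hw), ih]
    ring
  | pred k ih =>
    have := hf (q ^ (-(k : ℤ) - 1) * w) (mul_ne_zero (zpow_ne_zero _ hq) hw)
    rw [← mul_assoc, ← zpow_one_add₀ hq, show 1 + (-(k : ℤ) - 1) = -k by ring, ih] at this
    rw [zpow_sub_one₀ hc, mul_right_comm, this]
    field_simp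

namespace ResidueA

noncomputable def qPochhammer (q x : ℂ) : ℂ := ∏' n : ℕ, (1 - x * q ^ n)

variable {q : ℂ}

lemma summable_norm_mul_pow (hq : ‖q‖ < 1) (x : ℂ) : Summable fun n : ℕ => ‖x * q ^ n‖ := by
  simpa [norm_mul, norm_pow] using
    (summable_geometric_of_lt_one (norm_nonneg q) hq).mul_left ‖x‖

lemma hasProd_qPochhammer (hq : ‖q‖ < 1) (x : ℂ) :
    HasProd (fun n : ℕ => 1 - x * q ^ n) (qPochhammer q x) := by
  simp only [sub_eq_add_neg]
  exact (multipliable_one_add_of_summable (by simpa using summable_norm_mul_pow hq x)).hasProd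

lemma hasProd_qPochhammer_mul (hq : ‖q‖ < 1) (x : ℂ) :
    HasProd (fun n : ℕ => 1 - x * q ^ (n + 1)) (qPochhammer q (q * x)) := by
  convert hasProd_qPochhammer hq (q * x) using 2 with n
  ring

lemma qPochhammer_eq_one_sub_mul (hq : ‖q‖ < 1) (x : ℂ) :
    qPochhammer q x = (1 - x) * qPochhammer q (q * x) := by
  simpa using (hasProd_qPochhammer hq x).unique (hasProd_qPochhammer_mul hq x).zero_mul

lemma exists_eq_zero_of_qPochhammer_eq_zero (hq : ‖q‖ < 1) {x : ℂ} (hx : qPochhammer q x = 0) :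
    ∃ n : ℕ, 1 - x * q ^ n = 0 := by
  by_contra! h
  simp only [sub_eq_add_neg] at h
  exact tprod_one_add_ne_zero_of_summable h (by simpa using summable_norm_mul_pow hq x) hx

lemma qPochhammer_self_ne_zero (hq : ‖q‖ < 1) : qPochhammer q q ≠ 0 := by
  intro h
  obtain ⟨n, hn⟩ := exists_eq_zero_of_qPochhammer_eq_zero hq h
  have : ‖q * q ^ n‖ < 1 := by
    rw [norm_mul, norm_pow]
    exact mul_lt_one_of_nonneg_of_lt_one_left (norm_nonneg q) hq
      (pow_le_one₀ (norm_nonneg q) hq.le)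
  simp [← sub_eq_zero.mp hn] at this

lemma continuousOn_qPochhammer_ball (hq : ‖q‖ < 1) (R : ℝ) :
    ContinuousOn (qPochhammer q) (Metric.ball 0 R) := by
  have hprod := Summable.hasProdLocallyUniformlyOn_nat_one_add (K := Metric.ball (0 : ℂ) R)
    (f := fun n x => -(x * q ^ n)) Metric.isOpen_ball
    ((summable_geometric_of_lt_one (norm_nonneg q) hq).mul_left R)
    (Eventually.of_forall fun n x hx => ?_) (fun n => by fun_prop)
  · simp only [← sub_eq_add_neg] at hprod
    refine (hasProdLocallyUniformlyOn_iff_tendstoLocallyUniformlyOn.mp hprod).continuousOn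
      (Frequently.of_forall fun s => by fun_prop)
  · rw [norm_neg, norm_mul, norm_pow]
    gcongr
    exact (mem_ball_zero_iff.mp hx).le

lemma continuous_qPochhammer (hq : ‖q‖ < 1) : Continuous (qPochhammer q) :=
  continuous_iff_continuousAt.mpr fun x =>
    (continuousOn_qPochhammer_ball hq (‖x‖ + 1)).continuousAt
      (Metric.isOpen_ball.mem_nhds (by simp))

noncomputable def qTheta (q x : ℂ) : ℂ := qPochhammer q x * qPochhammer q (q * x⁻¹)

lemma hasProd_qTheta (hq : ‖q‖ < 1) (x : ℂ) :
    HasProd (fun n : ℕ => (1 - x * q ^ n) * (1 - x⁻¹ * q ^ (n + 1))) (qTheta q x) :=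
  (hasProd_qPochhammer hq x).mul (hasProd_qPochhammer_mul hq x⁻¹)

lemma qTheta_eq_one_sub_mul (hq : ‖q‖ < 1) (x : ℂ) :
    qTheta q x = (1 - x) * (qPochhammer q (q * x) * qPochhammer q (q * x⁻¹)) := by
  rw [qTheta, qPochhammer_eq_one_sub_mul hq x, mul_assoc]

lemma qTheta_mul_left (hq0 : q ≠ 0) (hq : ‖q‖ < 1) {x : ℂ} (hx : x ≠ 0) :
    qTheta q (q * x) = -x⁻¹ * qTheta q x := by
  rw [qTheta, show q * (q * x)⁻¹ = x⁻¹ by field_simp, qPochhammer_eq_one_sub_mul hq x⁻¹,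
    qTheta_eq_one_sub_mul hq x]
  field_simp
  ring

lemma A_eq_qTheta_div (hq : ‖q‖ < 1) (y w : ℂ) : A q y w = qTheta q (y * w) / qTheta q w := by
  rcases ne_or_eq (qTheta q w) 0 with hw | hw
  · exact ((hasProd_qTheta hq (y * w)).div₀ (hasProd_qTheta hq w) hw).tprod_eq
  -- Where `θ(w) = 0`, some factor of the product defining `A` is a junk quotient `x / 0 = 0`.
  · obtain ⟨n, hn⟩ : ∃ n : ℕ, (1 - w * q ^ n) * (1 - w⁻¹ * q ^ (n + 1)) = 0 := by
      rcases mul_eq_zero.mp hw with h | h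
      · obtain ⟨n, hn⟩ := exists_eq_zero_of_qPochhammer_eq_zero hq h
        exact ⟨n, mul_eq_zero_of_left hn _⟩
      · obtain ⟨n, hn⟩ := exists_eq_zero_of_qPochhammer_eq_zero hq h
        exact ⟨n, mul_eq_zero_of_right _ (by rw [← hn]; ring)⟩
    rw [hw, div_zero, A]
    exact tprod_of_exists_eq_zero ⟨n, by rw [hn, div_zero]⟩

lemma B_eq_qTheta_div (hq : ‖q‖ < 1) (y : ℂ) : B q y = qTheta q y / qPochhammer q q ^ 2 := by
  have hden : HasProd (fun n : ℕ => (1 - q ^ (n + 1)) ^ 2) (qPochhammer q q ^ 2) := by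
    simpa using (hasProd_qPochhammer_mul hq 1).pow 2
  exact ((hasProd_qTheta hq y).div₀ hden (pow_ne_zero 2 (qPochhammer_self_ne_zero hq))).tprod_eq

lemma A_mul_left (hq0 : q ≠ 0) (hq : ‖q‖ < 1) {y w : ℂ} (hy : y ≠ 0) (hw : w ≠ 0) :
    A q y (q * w) = y⁻¹ * A q y w := by
  rw [A_eq_qTheta_div hq, A_eq_qTheta_div hq, mul_left_comm,
    qTheta_mul_left hq0 hq (mul_ne_zero hy hw), qTheta_mul_left hq0 hq hw, mul_div_mul_comm,
    mul_inv, neg_div_neg_eq, mul_div_cancel_right₀ _ (inv_ne_zero hw)]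

lemma A_zpow_mul (hq0 : q ≠ 0) (hq : ‖q‖ < 1) {y w : ℂ} (hy : y ≠ 0) (hw : w ≠ 0) (m : ℤ) :
    A q y (q ^ m * w) = y ^ (-m) * A q y w := by
  rw [zpow_neg, ← inv_zpow]
  exact apply_zpow_mul hq0 (inv_ne_zero hy) (fun w hw => A_mul_left hq0 hq hy hw) m hw

lemma tendsto_sub_one_mul_A (hq : ‖q‖ < 1) {y : ℂ} (hy : y ≠ 0) :
    Tendsto (fun s => (s - 1) * A q y s) (𝓝[≠] 1) (𝓝 (-B q y)) := by
  set g : ℂ → ℂ := fun s =>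
    -(qTheta q (y * s) / (qPochhammer q (q * s) * qPochhammer q (q * s⁻¹)))
  have hg : ContinuousAt g 1 := by
    have hE := continuous_qPochhammer hq
    simp only [g, qTheta]
    fun_prop (disch := simp [hy, qPochhammer_self_ne_zero hq])
  have hg1 : g 1 = -B q y := by simp [g, B_eq_qTheta_div hq, sq]
  refine (hg1 ▸ hg.tendsto).mono_left nhdsWithin_le_nhds |>.congr' ?_
  filter_upwards [self_mem_nhdsWithin] with s hs
  rw [A_eq_qTheta_div hq, qTheta_eq_one_sub_mul hq s, ← neg_sub 1 s, neg_mul, ← div_div,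
    ← mul_div_assoc, mul_div_cancel₀ _ (sub_ne_zero.mpr (Ne.symm hs))]

lemma tendsto_sub_zpow_mul_A (hq0 : q ≠ 0) (hq : ‖q‖ < 1) {y : ℂ} (hy : y ≠ 0) (m : ℤ) :
    Tendsto (fun w => (w - q ^ m) * A q y w) (𝓝[≠] (q ^ m)) (𝓝 (-q ^ m * y ^ (-m) * B q y)) := by
  have hmap := (Homeomorph.mulLeft₀ (q ^ m) (zpow_ne_zero m hq0)).map_punctured_nhds_eq 1
  simp only [Homeomorph.coe_mulLeft₀, mul_one] at hmap
  rw [← hmap, tendsto_map'_iff,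
    show -q ^ m * y ^ (-m) * B q y = q ^ m * y ^ (-m) * -B q y by ring]
  refine ((tendsto_sub_one_mul_A hq hy).const_mul _).congr' ?_
  filter_upwards [nhdsWithin_le_nhds (eventually_ne_nhds one_ne_zero)] with s hs
  simp only [Function.comp_apply, A_zpow_mul hq0 hq hy hs m]
  ring

lemma tendsto_sub_zpow_mul_A_inv (hq0 : q ≠ 0) (hq : ‖q‖ < 1) {y : ℂ} (hy : y ≠ 0) (m : ℤ) :
    Tendsto (fun w => (w - q ^ m) * A q y w⁻¹) (𝓝[≠] (q ^ m)) (𝓝 (q ^ m * y ^ m * B q y)) := by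
  have hqm : q ^ m ≠ 0 := zpow_ne_zero m hq0
  have hinv : Tendsto Inv.inv (𝓝[≠] (q ^ m)) (𝓝[≠] (q ^ (-m))) :=
    zpow_neg q m ▸ tendsto_inv₀_nhdsNE hqm
  -- `w - qᵐ = -w qᵐ (w⁻¹ - q⁻ᵐ)`
  have hlin : Tendsto (fun w => -w * q ^ m) (𝓝[≠] (q ^ m)) (𝓝 (-q ^ m * q ^ m)) :=
    ((continuous_neg.mul continuous_const).tendsto _).mono_left nhdsWithin_le_nhds
  have hlim := hlin.mul ((tendsto_sub_zpow_mul_A hq0 hq hy (-m)).comp hinv)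
  rw [show -q ^ m * q ^ m * (-q ^ (-m) * y ^ (-(-m)) * B q y) = q ^ m * y ^ m * B q y by
    rw [neg_neg, zpow_neg]; field_simp] at hlim
  refine hlim.congr' ?_
  filter_upwards [nhdsWithin_le_nhds (eventually_ne_nhds hqm)] with w hw
  simp only [Function.comp_apply, zpow_neg]
  field_simp
  ring

end ResidueA

theorem residue_A_uv_general (q y v : ℂ) (hq0 : 0 < ‖q‖) (hq1 : ‖q‖ < 1)
    (hy : y ≠ 0)
    (hv : v ≠ 0) (m : ℤ) :
    Filter.Tendsto (fun u : ℂ => (u - v⁻¹ * q ^ m) * A q y (u * v))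
      (𝓝[≠] (v⁻¹ * q ^ m)) (𝓝 (-v⁻¹ * q ^ m * y ^ (-m) * B q y)) ∧
    Filter.Tendsto (fun u : ℂ => (u - v⁻¹ * q ^ m) * A q y (u * v)⁻¹)
      (𝓝[≠] (v⁻¹ * q ^ m)) (𝓝 (v⁻¹ * q ^ m * y ^ m * B q y)) := by
  have hq : q ≠ 0 := norm_pos_iff.mp hq0
  have hmul : Tendsto (· * v) (𝓝[≠] (v⁻¹ * q ^ m)) (𝓝[≠] (q ^ m)) := by
    have := ((Homeomorph.mulRight₀ v hv).map_punctured_nhds_eq (v⁻¹ * q ^ m)).le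
    simp only [Homeomorph.coe_mulRight₀] at this
    rwa [mul_right_comm, inv_mul_cancel₀ hv, one_mul] at this
  constructor
  · convert ((ResidueA.tendsto_sub_zpow_mul_A hq hq1 hy m).comp hmul).const_mul v⁻¹
      using 2 with u
    · simp only [Function.comp_apply]
      field_simp
    · ring
  · convert ((ResidueA.tendsto_sub_zpow_mul_A_inv hq hq1 hy m).comp hmul).const_mul v⁻¹
      using 2 with u
    · simp only [Function.comp_apply]
      field_simp
    · ring

/-- Residues of u ↦ A(q,y,uv) and u ↦ A(q,y,(uv)⁻¹) at u = v⁻¹qᵐ. -/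
theorem residue_A_uv (q y v : ℂ) (hq0 : 0 < ‖q‖) (hq1 : ‖q‖ < 1)
    (hy : y ≠ 0) (hy' : ∀ k : ℤ, y ≠ q ^ k)
    (hv : v ≠ 0) (hv' : ∀ k : ℤ, v ≠ q ^ k) (m : ℤ) :
    Filter.Tendsto (fun u : ℂ => (u - v⁻¹ * q ^ m) * A q y (u * v))
      (𝓝[≠] (v⁻¹ * q ^ m)) (𝓝 (-v⁻¹ * q ^ m * y ^ (-m) * B q y)) ∧
    Filter.Tendsto (fun u : ℂ => (u - v⁻¹ * q ^ m) * A q y (u * v)⁻¹)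
      (𝓝[≠] (v⁻¹ * q ^ m)) (𝓝 (v⁻¹ * q ^ m * y ^ m * B q y)) :=
  residue_A_uv_general q y v hq0 hq1 hy hv m
end

section
/- Let V be a finite set and for each v ∈ V let (a¹ᵥ, b¹ᵥ), (a²ᵥ, b²ᵥ), (a³ᵥ, b³ᵥ) ∈ ℤ × ℤ satisfy the balancing condition a¹ᵥ + a²ᵥ + a³ᵥ = 0 and b¹ᵥ + b²ᵥ + b³ᵥ = 0. Let τ be in the complex upper half-plane and t₁, t₂ ∈ ℂ be such that aʲᵥ t₁ + bʲᵥ t₂ ∉ ℤ + τℤ for every v ∈ V and j ∈ {1,2,3}. Then for every z ∈ ℂ, Z(τ, z+τ; t₁, t₂) = (−e^{−2πiz − πiτ})³ · Z(τ, z; t₁, t₂), i.e. Z(τ, z+τ; t₁, t₂) = −e^{−6πiz − 3πiτ} · Z(τ, z; t₁, t₂). -/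
open Complex Filter Topology

/-!
Completing the square in the summation index shows that the `n`-th term of `θ₁(τ, z + τ)` is
`−e^{−2πiz−πiτ}` times the `(n+1)`-st term of `θ₁(τ, z)`; since reindexing a `tsum` along a
bijection of `ℤ` needs no summability, `θ₁(τ, z + τ) = −e^{−2πiz−πiτ} θ₁(τ, z)`. In `Z` the
numerator at weight `u = a t₁ + b t₂` therefore picks up `−e^{−2πiz−πiτ} e^{−2πiu}`, and over each
vertex the factors `e^{−2πiu}` multiply to `1` by the balancing condition.
-/

open Finset

lemma theta1_term_add_tau (τ z : ℂ) (n : ℤ) :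
    (-1 : ℂ) ^ n * cexp (Real.pi * I * τ * ((n : ℂ) - 1/2) ^ 2) *
        cexp (2 * Real.pi * I * (z + τ) * ((n : ℂ) - 1/2)) =
      -cexp (-2 * Real.pi * I * z - Real.pi * I * τ) *
        ((-1 : ℂ) ^ (n + 1) * cexp (Real.pi * I * τ * (((n + 1 : ℤ) : ℂ) - 1/2) ^ 2) *
          cexp (2 * Real.pi * I * z * (((n + 1 : ℤ) : ℂ) - 1/2))) := by
  have hexp : Real.pi * I * τ * ((n : ℂ) - 1/2) ^ 2 + 2 * Real.pi * I * (z + τ) * ((n : ℂ) - 1/2) =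
      (-2 * Real.pi * I * z - Real.pi * I * τ) +
        (Real.pi * I * τ * (((n + 1 : ℤ) : ℂ) - 1/2) ^ 2 +
          2 * Real.pi * I * z * (((n + 1 : ℤ) : ℂ) - 1/2)) := by
    push_cast
    ring
  rw [zpow_add_one₀ (by norm_num), mul_assoc, ← exp_add, hexp, exp_add, exp_add]
  ring

lemma theta1_add_tau (τ z : ℂ) :
    theta1 τ (z + τ) = -cexp (-2 * Real.pi * I * z - Real.pi * I * τ) * theta1 τ z := by
  unfold theta1
  have hshift := (Equiv.addRight (1 : ℤ)).tsum_eq fun n : ℤ => (-1 : ℂ) ^ n *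
    cexp (Real.pi * I * τ * ((n : ℂ) - 1/2) ^ 2) * cexp (2 * Real.pi * I * z * ((n : ℂ) - 1/2))
  rw [Equiv.coe_addRight] at hshift
  rw [tsum_congr (theta1_term_add_tau τ z), tsum_mul_left, hshift]
  ring

lemma theta1_add_tau_add (τ z u : ℂ) :
    theta1 τ (z + τ + u) =
      -cexp (-2 * Real.pi * I * z - Real.pi * I * τ) * cexp (-2 * Real.pi * I * u) *
        theta1 τ (z + u) := by
  rw [add_right_comm, theta1_add_tau, show -2 * Real.pi * I * (z + u) - Real.pi * I * τ =
    (-2 * Real.pi * I * z - Real.pi * I * τ) + -2 * Real.pi * I * u by ring, exp_add]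
  ring

lemma prod_mul_exp_eq_pow_of_sum_eq_zero {ι : Type*} (s : Finset ι) (c k : ℂ) (u : ι → ℂ)
    (hu : ∑ j ∈ s, u j = 0) : ∏ j ∈ s, c * cexp (k * u j) = c ^ #s := by
  rw [prod_mul_distrib, prod_const, ← exp_sum, ← mul_sum, hu, mul_zero, exp_zero, mul_one]

lemma sum_pairing_eq_zero {ι : Type*} (s : Finset ι) (w : ι → ℤ × ℤ)
    (hw : ∑ j ∈ s, w j = 0) (t₁ t₂ : ℂ) :
    ∑ j ∈ s, (((w j).1 : ℂ) * t₁ + ((w j).2 : ℂ) * t₂) = 0 := by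
  have h₁ : ∑ j ∈ s, (w j).1 = 0 := by rw [← Prod.fst_sum, hw, Prod.fst_zero]
  have h₂ : ∑ j ∈ s, (w j).2 = 0 := by rw [← Prod.snd_sum, hw, Prod.snd_zero]
  rw [sum_add_distrib, ← sum_mul, ← sum_mul, ← Int.cast_sum, ← Int.cast_sum, h₁, h₂]
  simp

theorem Z_z_add_tau_general {V : Type*} [Fintype V] (w : V → Fin 3 → ℤ × ℤ)
    (hbal : ∀ v : V, ∑ j : Fin 3, w v j = 0)
    (τ t₁ t₂ : ℂ)
    (z : ℂ) :
    Z w τ (z + τ) t₁ t₂ =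
      (-Complex.exp (-2 * Real.pi * Complex.I * z - Real.pi * Complex.I * τ)) ^ 3 *
        Z w τ z t₁ t₂ := by
  set c := -cexp (-2 * Real.pi * I * z - Real.pi * I * τ)
  unfold Z
  rw [mul_sum]
  refine sum_congr rfl fun v _ => ?_
  set u : Fin 3 → ℂ := fun j => ((w v j).1 : ℂ) * t₁ + ((w v j).2 : ℂ) * t₂
  calc ∏ j : Fin 3, theta1 τ (z + τ + ((w v j).1 : ℂ) * t₁ + ((w v j).2 : ℂ) * t₂) / theta1 τ (u j)
      = ∏ j : Fin 3, c * cexp (-2 * Real.pi * I * u j) * (theta1 τ (z + u j) / theta1 τ (u j)) :=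
        prod_congr rfl fun j _ => by rw [add_assoc _ (_ * t₁), theta1_add_tau_add, mul_div_assoc]
    _ = c ^ 3 * ∏ j : Fin 3, theta1 τ (z + ((w v j).1 : ℂ) * t₁ + ((w v j).2 : ℂ) * t₂) /
          theta1 τ (u j) := by
        rw [prod_mul_distrib, prod_mul_exp_eq_pow_of_sum_eq_zero _ _ _ _
          (sum_pairing_eq_zero _ _ (hbal v) t₁ t₂), card_univ, Fintype.card_fin]
        simp only [u, add_assoc]

/-- Z(τ, z+τ; t₁, t₂) = −e^{−6πiz−3πiτ} Z(τ, z; t₁, t₂). -/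
theorem Z_z_add_tau {V : Type*} [Fintype V] (w : V → Fin 3 → ℤ × ℤ)
    (hbal : ∀ v : V, ∑ j : Fin 3, w v j = 0)
    (τ t₁ t₂ : ℂ) (hτ : 0 < τ.im)
    (ht : ∀ (v : V) (j : Fin 3),
      ((w v j).1 : ℂ) * t₁ + ((w v j).2 : ℂ) * t₂ ∉ lattice τ)
    (z : ℂ) :
    Z w τ (z + τ) t₁ t₂ =
      (-Complex.exp (-2 * Real.pi * Complex.I * z - Real.pi * Complex.I * τ)) ^ 3 *
        Z w τ z t₁ t₂ :=
  Z_z_add_tau_general w hbal τ t₁ t₂ z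
end

section
/- Let V be a finite set and for each v ∈ V let (a¹ᵥ, b¹ᵥ), (a²ᵥ, b²ᵥ), (a³ᵥ, b³ᵥ) ∈ ℤ × ℤ satisfy the balancing condition a¹ᵥ + a²ᵥ + a³ᵥ = 0 and b¹ᵥ + b²ᵥ + b³ᵥ = 0. Let τ be in the complex upper half-plane and t₁, t₂ ∈ ℂ be such that aʲᵥ t₁ + bʲᵥ t₂ ∉ ℤ + τℤ for every v ∈ V and j ∈ {1,2,3}. Then for every z ∈ ℂ, Z(τ, z; t₁+τ, t₂) = Z(τ, z; t₁, t₂) and Z(τ, z; t₁, t₂+τ) = Z(τ, z; t₁, t₂). -/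
/-!
Shifting `t₁` (or `t₂`) by `τ` shifts the argument of every theta factor by an integer multiple
`m τ` of `τ`. By quasi-periodicity, `θ₁(τ, u + m τ) = (-1)^m e^{-πiτm² - 2πimu} θ₁(τ, u)`, so in
each ratio `θ₁(z + x + mτ) / θ₁(x + mτ)` everything but `e^{-2πimz}` cancels, and by the balancing
condition the integers `m` attached to the three factors of a fixed point sum to zero.
-/

open Complex Filter Topology

open Real Finset

theorem neg_one_zpow_eq_mul_zpow_add {K : Type*} [Field K] (n m : ℤ) :
    (-1 : K) ^ n = (-1) ^ m * (-1) ^ (n + m) := by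
  rw [zpow_add₀ (neg_ne_zero.2 one_ne_zero), mul_left_comm, ← mul_zpow]
  norm_num

theorem theta1_add_int_mul (τ z : ℂ) (m : ℤ) :
    theta1 τ (z + m * τ) =
      (-1) ^ m * cexp (-(π * I * τ * m ^ 2) - 2 * π * I * m * z) * theta1 τ z := by
  set c := (-1) ^ m * cexp (-(π * I * τ * m ^ 2) - 2 * π * I * m * z)
  set f : ℤ → ℂ := fun n =>
    (-1 : ℂ) ^ n * cexp (π * I * τ * (n - 1/2) ^ 2) * cexp (2 * π * I * z * (n - 1/2))
  have hterm (n : ℤ) : (-1 : ℂ) ^ n * cexp (π * I * τ * (n - 1/2) ^ 2) *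
      cexp (2 * π * I * (z + m * τ) * (n - 1/2)) = c * f (n + m) := by
    have hexp : cexp (π * I * τ * (n - 1/2) ^ 2) * cexp (2 * π * I * (z + m * τ) * (n - 1/2)) =
        cexp (-(π * I * τ * m ^ 2) - 2 * π * I * m * z) *
          (cexp (π * I * τ * ((n + m : ℤ) - 1/2) ^ 2) *
            cexp (2 * π * I * z * ((n + m : ℤ) - 1/2))) := by
      simp only [← Complex.exp_add, Int.cast_add]
      ring_nf
    simp only [c, f, neg_one_zpow_eq_mul_zpow_add n m]
    linear_combination (-1 : ℂ) ^ m * (-1) ^ (n + m) * hexp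
  -- Reindexing by a bijection preserves `tsum` unconditionally, so no summability is needed.
  have hshift : ∑' n, f (n + m) = ∑' n, f n := (Equiv.addRight m).tsum_eq f
  unfold theta1
  rw [tsum_congr hterm, tsum_mul_left, hshift]
  ring

theorem theta1_div_theta1_add_int_mul (τ z x : ℂ) (m : ℤ) :
    theta1 τ (z + x + m * τ) / theta1 τ (x + m * τ) =
      cexp (-(2 * π * I * m * z)) * (theta1 τ (z + x) / theta1 τ x) := by
  rw [theta1_add_int_mul, theta1_add_int_mul, mul_div_mul_comm, mul_div_mul_comm,
    div_self (zpow_ne_zero m (neg_ne_zero.2 one_ne_zero)), one_mul, ← Complex.exp_sub]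
  ring_nf

theorem prod_theta1_div_theta1_add_int_mul {ι : Type*} [Fintype ι] (τ z : ℂ) (x : ι → ℂ)
    (m : ι → ℤ) (hm : ∑ j, m j = 0) :
    ∏ j, theta1 τ (z + x j + m j * τ) / theta1 τ (x j + m j * τ) =
      ∏ j, theta1 τ (z + x j) / theta1 τ (x j) := by
  have hexp : ∏ j, cexp (-(2 * π * I * m j * z)) = 1 := by
    rw [← Complex.exp_sum, ← Complex.exp_zero]
    have hm' : ∑ j, (m j : ℂ) = 0 := by exact_mod_cast hm
    simp only [sum_neg_distrib, ← sum_mul, ← mul_sum, hm', mul_zero, zero_mul, neg_zero]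
  simp only [theta1_div_theta1_add_int_mul, prod_mul_distrib, hexp, one_mul]

theorem Z_add_int_mul_tau {V : Type*} [Fintype V] (w : V → Fin 3 → ℤ × ℤ)
    (hbal : ∀ v : V, ∑ j : Fin 3, w v j = 0) (τ z t₁ t₂ : ℂ) (k₁ k₂ : ℤ) :
    Z w τ z (t₁ + k₁ * τ) (t₂ + k₂ * τ) = Z w τ z t₁ t₂ := by
  refine sum_congr rfl fun v _ => ?_
  have hm : ∑ j, ((w v j).1 * k₁ + (w v j).2 * k₂) = 0 := by
    rw [sum_add_distrib, ← sum_mul, ← sum_mul, ← Prod.fst_sum, ← Prod.snd_sum, hbal v]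
    simp
  convert prod_theta1_div_theta1_add_int_mul τ z (fun j => (w v j).1 * t₁ + (w v j).2 * t₂) _ hm
    using 4 <;> push_cast <;> ring

theorem Z_t_add_tau_general {V : Type*} [Fintype V] (w : V → Fin 3 → ℤ × ℤ)
    (hbal : ∀ v : V, ∑ j : Fin 3, w v j = 0)
    (τ t₁ t₂ : ℂ)
    (z : ℂ) :
    Z w τ z (t₁ + τ) t₂ = Z w τ z t₁ t₂ ∧ Z w τ z t₁ (t₂ + τ) = Z w τ z t₁ t₂ := by
  constructor
  · simpa using Z_add_int_mul_tau w hbal τ z t₁ t₂ 1 0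
  · simpa using Z_add_int_mul_tau w hbal τ z t₁ t₂ 0 1

/-- Z(τ, z; t₁+τ, t₂) = Z(τ, z; t₁, t₂) and Z(τ, z; t₁, t₂+τ) = Z(τ, z; t₁, t₂). -/
theorem Z_t_add_tau {V : Type*} [Fintype V] (w : V → Fin 3 → ℤ × ℤ)
    (hbal : ∀ v : V, ∑ j : Fin 3, w v j = 0)
    (τ t₁ t₂ : ℂ) (hτ : 0 < τ.im)
    (ht : ∀ (v : V) (j : Fin 3),
      ((w v j).1 : ℂ) * t₁ + ((w v j).2 : ℂ) * t₂ ∉ lattice τ)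
    (z : ℂ) :
    Z w τ z (t₁ + τ) t₂ = Z w τ z t₁ t₂ ∧ Z w τ z t₁ (t₂ + τ) = Z w τ z t₁ t₂ :=
  Z_t_add_tau_general w hbal τ t₁ t₂ z
end

section
/- Let V be a finite set and for each v ∈ V let (a¹ᵥ, b¹ᵥ), (a²ᵥ, b²ᵥ), (a³ᵥ, b³ᵥ) ∈ ℤ × ℤ satisfy the balancing condition a¹ᵥ + a²ᵥ + a³ᵥ = 0 and b¹ᵥ + b²ᵥ + b³ᵥ = 0. Let τ be in the complex upper half-plane and t₁, t₂ ∈ ℂ be such that aʲᵥ t₁ + bʲᵥ t₂ ∉ ℤ + τℤ for every v ∈ V and j ∈ {1,2,3}. Then for every z ∈ ℂ, Z(−1/τ, z/τ; t₁/τ, t₂/τ) = e^{3πiz²/τ} · Z(τ, z; t₁, t₂). -/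
open Complex Filter Topology

/-
θ₁ is a shifted and rescaled `jacobiTheta₂`, so Jacobi's transformation formula for `jacobiTheta₂`
gives θ₁(−1/τ, z/τ) = c(τ) e^{πiz²/τ} θ₁(τ, z) with c(τ) ≠ 0. In each ratio θ₁(z + s)/θ₁(s) the
factor c(τ) cancels and the exponentials leave e^{πi(z² + 2zs)/τ}; over the three weights of a fixed
point the linear terms cancel by the balancing condition, leaving e^{3πiz²/τ}.
-/

open scoped Real

theorem theta1_eq_jacobiTheta₂ (τ z : ℂ) :
    theta1 τ z = I * cexp (π * I * τ / 4 - π * I * z) * jacobiTheta₂ (z + 1 / 2 - τ / 2) τ := by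
  rw [theta1, jacobiTheta₂, mul_assoc I]
  congr 1
  rw [← tsum_mul_left]
  refine tsum_congr fun n => ?_
  rw [jacobiTheta₂_term, ← exp_pi_mul_I, ← exp_int_mul, ← exp_add, ← exp_add, ← exp_add]
  congr 1
  ring

theorem theta1_modular {τ : ℂ} (hτ : τ ≠ 0) (z : ℂ) :
    theta1 (-1 / τ) (z / τ) =
      -I * (-I * τ) ^ (1 / 2 : ℂ) * cexp (π * I * z ^ 2 / τ) * theta1 τ z := by
  -- The argument of `jacobiTheta₂` in θ₁(−1/τ, z/τ) is z'/τ, and z' is one period τ away from the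
  -- argument z + 1/2 − τ/2 in θ₁(τ, z).
  set z' : ℂ := z + 1 / 2 + τ / 2
  have hshift : jacobiTheta₂ z' τ =
      cexp (-π * I * (τ + 2 * (z + 1 / 2 - τ / 2))) * jacobiTheta₂ (z + 1 / 2 - τ / 2) τ := by
    rw [show z' = z + 1 / 2 - τ / 2 + τ by ring, jacobiTheta₂_add_left']
  have hjacobi : jacobiTheta₂ (z' / τ) (-1 / τ) =
      (-I * τ) ^ (1 / 2 : ℂ) * cexp (π * I * z' ^ 2 / τ) * jacobiTheta₂ z' τ := by
    rw [jacobiTheta₂_functional_equation z' τ,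
      show -π * I * z' ^ 2 / τ = -(π * I * z' ^ 2 / τ) by ring, exp_neg]
    field_simp
  have hexp_sum : cexp (π * I * (-1 / τ) / 4 - π * I * (z / τ)) *
      (cexp (π * I * z' ^ 2 / τ) * cexp (-π * I * (τ + 2 * (z + 1 / 2 - τ / 2)))) =
      cexp (π * I * z ^ 2 / τ) * cexp (π * I * τ / 4 - π * I * z) * cexp (-π / 2 * I) := by
    simp only [← exp_add]
    congr 1
    field_simp
    ring
  rw [theta1_eq_jacobiTheta₂, theta1_eq_jacobiTheta₂,
    show z / τ + 1 / 2 - -1 / τ / 2 = z' / τ by field_simp; ring, hjacobi, hshift]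
  linear_combination (I * (-I * τ) ^ (1 / 2 : ℂ) * jacobiTheta₂ (z + 1 / 2 - τ / 2) τ) *
    (hexp_sum +
      cexp (π * I * z ^ 2 / τ) * cexp (π * I * τ / 4 - π * I * z) * exp_neg_pi_div_two_mul_I)

theorem theta1_div_theta1_modular {τ : ℂ} (hτ : τ ≠ 0) (z s : ℂ) :
    theta1 (-1 / τ) ((z + s) / τ) / theta1 (-1 / τ) (s / τ) =
      cexp (π * I * (z ^ 2 + 2 * z * s) / τ) * (theta1 τ (z + s) / theta1 τ s) := by
  have hc : -I * (-I * τ) ^ (1 / 2 : ℂ) ≠ 0 := by simp [cpow_eq_zero_iff, hτ]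
  rw [theta1_modular hτ, theta1_modular hτ, mul_assoc _ (cexp _), mul_assoc _ (cexp _),
    mul_div_mul_left _ _ hc, mul_div_mul_comm, ← exp_sub]
  congr 2
  ring

theorem prod_theta1_div_theta1_modular {ι : Type*} [Fintype ι] {τ : ℂ} (hτ : τ ≠ 0)
    {s : ι → ℂ} (hs : ∑ j, s j = 0) (z : ℂ) :
    ∏ j, theta1 (-1 / τ) ((z + s j) / τ) / theta1 (-1 / τ) (s j / τ) =
      cexp (Fintype.card ι * π * I * z ^ 2 / τ) * ∏ j, theta1 τ (z + s j) / theta1 τ (s j) := by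
  simp only [theta1_div_theta1_modular hτ, Finset.prod_mul_distrib, ← exp_sum]
  congr 2
  simp only [mul_add, add_div, Finset.sum_add_distrib, ← Finset.mul_sum, ← Finset.sum_div, hs,
    Finset.sum_const, Finset.card_univ, nsmul_eq_mul, mul_zero, zero_div, add_zero]
  ring

theorem sum_weight_eq_zero {ι : Type*} [Fintype ι] {w : ι → ℤ × ℤ} (hw : ∑ j, w j = 0)
    (t₁ t₂ : ℂ) : ∑ j, (((w j).1 : ℂ) * t₁ + ((w j).2 : ℂ) * t₂) = 0 := by
  have h₁ : ∑ j, (w j).1 = 0 := by rw [← Prod.fst_sum, hw, Prod.fst_zero]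
  have h₂ : ∑ j, (w j).2 = 0 := by rw [← Prod.snd_sum, hw, Prod.snd_zero]
  simp only [Finset.sum_add_distrib, ← Finset.sum_mul, ← Int.cast_sum, h₁, h₂, Int.cast_zero,
    zero_mul, add_zero]

theorem Z_modular_general {V : Type*} [Fintype V] (w : V → Fin 3 → ℤ × ℤ)
    (hbal : ∀ v : V, ∑ j : Fin 3, w v j = 0)
    (τ t₁ t₂ : ℂ) (hτ : 0 < τ.im)
    (z : ℂ) :
    Z w (-1 / τ) (z / τ) (t₁ / τ) (t₂ / τ) =
      Complex.exp (3 * Real.pi * Complex.I * z ^ 2 / τ) * Z w τ z t₁ t₂ := by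
  have hτ₀ : τ ≠ 0 := by rintro rfl; simp at hτ
  rw [Z, Z, Finset.mul_sum]
  refine Finset.sum_congr rfl fun v _ => ?_
  have h := prod_theta1_div_theta1_modular hτ₀ (sum_weight_eq_zero (hbal v) t₁ t₂) z
  rw [Fintype.card_fin, Nat.cast_ofNat] at h
  convert h using 5 <;> ring

/-- Z(−1/τ, z/τ; t₁/τ, t₂/τ) = e^{3πiz²/τ} Z(τ, z; t₁, t₂). -/
theorem Z_modular {V : Type*} [Fintype V] (w : V → Fin 3 → ℤ × ℤ)
    (hbal : ∀ v : V, ∑ j : Fin 3, w v j = 0)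
    (τ t₁ t₂ : ℂ) (hτ : 0 < τ.im)
    (ht : ∀ (v : V) (j : Fin 3),
      ((w v j).1 : ℂ) * t₁ + ((w v j).2 : ℂ) * t₂ ∉ lattice τ)
    (z : ℂ) :
    Z w (-1 / τ) (z / τ) (t₁ / τ) (t₂ / τ) =
      Complex.exp (3 * Real.pi * Complex.I * z ^ 2 / τ) * Z w τ z t₁ t₂ :=
  Z_modular_general w hbal τ t₁ t₂ hτ z
end
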